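/- arXiv:1607.02824 — 3 statements merged into one kernel-verified Lean document; each statement's English description precedes it below -/
import Mathlib

section
/- For any angles x and y, cos²((x−y)/2) · ρ((x+y)/2) + sin²((x−y)/2) · ρ((x+y)/2 + π/2) = (1/2)·ρ(x) + (1/2)·ρ(y). That is, the expected post-measurement density matrix when a qubit in state x (or y) is projectively measured in the basis at the average angle (x+y)/2 equals the arithmetic mean of ρ(x) and ρ(y). -/
/-!
Writing `ρ(θ) = (1 + R(2θ)) / 2` with `R(φ)` the reflection across the line at angle `φ / 2`,
and `ρ(θ + π/2) = (1 - R(2θ)) / 2`, both sides become `1/2 + (cos(x - y) / 2) R(x + y)`: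
on the left because `cos² - sin² = cos(2·)`, on the right by the sum-to-product formulas
`R(φ + ψ) + R(φ - ψ) = 2 cos ψ R(φ)`.
-/

open Real Matrix

noncomputable def qubitDensity (θ : ℝ) : Matrix (Fin 2) (Fin 2) ℝ :=
  !![Real.cos θ ^ 2, Real.cos θ * Real.sin θ;
     Real.cos θ * Real.sin θ, Real.sin θ ^ 2]

noncomputable def reflectionMatrix (φ : ℝ) : Matrix (Fin 2) (Fin 2) ℝ :=
  !![cos φ, sin φ; sin φ, -cos φ]

lemma qubitDensity_eq_half_smul_one_add (θ : ℝ) :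
    qubitDensity θ = (1 / 2 : ℝ) • (1 + reflectionMatrix (2 * θ)) := by
  rw [qubitDensity, reflectionMatrix, cos_sq θ, sin_sq_eq_half_sub θ, sin_two_mul, one_fin_two]
  ext i j
  fin_cases i <;> fin_cases j <;>
    simp only [Fin.zero_eta, Fin.mk_one, Fin.isValue, Matrix.smul_apply, Matrix.add_apply,
      of_apply, cons_val', cons_val_zero, cons_val_one, cons_val_fin_one, smul_eq_mul] <;> ring

lemma qubitDensity_add_pi_div_two (θ : ℝ) :
    qubitDensity (θ + π / 2) = (1 / 2 : ℝ) • (1 - reflectionMatrix (2 * θ)) := by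
  rw [qubitDensity, reflectionMatrix, cos_add_pi_div_two, sin_add_pi_div_two, neg_sq, cos_sq θ,
    sin_sq_eq_half_sub θ, sin_two_mul, one_fin_two]
  ext i j
  fin_cases i <;> fin_cases j <;>
    simp only [Fin.zero_eta, Fin.mk_one, Fin.isValue, Matrix.smul_apply, Matrix.sub_apply,
      of_apply, cons_val', cons_val_zero, cons_val_one, cons_val_fin_one, smul_eq_mul] <;> ring

lemma reflectionMatrix_add_add_reflectionMatrix_sub (φ ψ : ℝ) :
    reflectionMatrix (φ + ψ) + reflectionMatrix (φ - ψ) =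
      (2 * cos ψ) • reflectionMatrix φ := by
  rw [reflectionMatrix, reflectionMatrix, reflectionMatrix, cos_add, cos_sub, sin_add, sin_sub]
  ext i j
  fin_cases i <;> fin_cases j <;>
    simp only [Fin.zero_eta, Fin.mk_one, Fin.isValue, Matrix.smul_apply, Matrix.add_apply,
      of_apply, cons_val', cons_val_zero, cons_val_one, cons_val_fin_one, smul_eq_mul] <;> ring

theorem expected_post_measurement_density (x y : ℝ) :
    Real.cos ((x - y) / 2) ^ 2 • qubitDensity ((x + y) / 2) +
      Real.sin ((x - y) / 2) ^ 2 • qubitDensity ((x + y) / 2 + Real.pi / 2) =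
    (1 / 2 : ℝ) • qubitDensity x + (1 / 2 : ℝ) • qubitDensity y := by
  obtain ⟨a, b, rfl, rfl⟩ : ∃ a b, x = a + b ∧ y = a - b :=
    ⟨(x + y) / 2, (x - y) / 2, by ring, by ring⟩
  have hmean : (a + b + (a - b)) / 2 = a := by ring
  have hhalf : (a + b - (a - b)) / 2 = b := by ring
  rw [hmean, hhalf, qubitDensity_add_pi_div_two, qubitDensity_eq_half_smul_one_add,
    qubitDensity_eq_half_smul_one_add, qubitDensity_eq_half_smul_one_add, mul_add, mul_sub,
    cos_sq, sin_sq_eq_half_sub]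
  linear_combination (norm := module)
    (-1 / 4 : ℝ) • reflectionMatrix_add_add_reflectionMatrix_sub (2 * a) (2 * b)
end

section
/- Let x, y be angles, let s = (x+y)/2 and let p = cos²((x−y)/2), q = sin²((x−y)/2). If two independent random matrices A, B each equal ρ(s) with probability p and ρ(s + π/2) with probability q, then E[Tr(A·B)] = 1/2 + (1/2)·Tr(ρ(x)·ρ(y)). In closed form: p²·Tr(ρ(s)ρ(s)) + 2pq·Tr(ρ(s)ρ(s+π/2)) + q²·Tr(ρ(s+π/2)ρ(s+π/2)) = 1/2 + (1/2)·cos²(x−y). -/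
open Real Matrix

/- Measuring at the average angle makes both outcomes pure states that are either equal
(fidelity 1) or orthogonal (fidelity 0), so the expected fidelity is `p² + q²`; with
`p + q = 1` this is `1 - 2pq = 1 - sin² (x - y) / 2`. -/

theorem trace_qubitDensity_mul (a b : ℝ) :
    (qubitDensity a * qubitDensity b).trace = cos (a - b) ^ 2 := by
  simp only [qubitDensity, mul_fin_two, trace_fin_two_of, cos_sub]
  ring

theorem cos_sq_sq_add_sin_sq_sq (t : ℝ) :
    (cos t ^ 2) ^ 2 + (sin t ^ 2) ^ 2 = 1 / 2 + 1 / 2 * cos (2 * t) ^ 2 := by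
  have h := sin_sq_add_cos_sq t
  rw [cos_two_mul]
  linear_combination (cos t ^ 2 + sin t ^ 2 + 1 - 2 * cos t ^ 2) * h

theorem expected_fidelity_after_pairwise_measurement (x y : ℝ) :
    let s := (x + y) / 2
    let p := Real.cos ((x - y) / 2) ^ 2
    let q := Real.sin ((x - y) / 2) ^ 2
    p ^ 2 * (qubitDensity s * qubitDensity s).trace +
      2 * p * q * (qubitDensity s * qubitDensity (s + Real.pi / 2)).trace +
      q ^ 2 * (qubitDensity (s + Real.pi / 2) * qubitDensity (s + Real.pi / 2)).trace =
    1 / 2 + 1 / 2 * Real.cos (x - y) ^ 2 := by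
  intro s p q
  simp only [trace_qubitDensity_mul, sub_self, sub_add_cancel_left, cos_zero, cos_neg,
    cos_pi_div_two]
  have h := cos_sq_sq_add_sin_sq_sq ((x - y) / 2)
  rw [mul_div_cancel₀ _ two_ne_zero] at h
  linear_combination h
end

section
/- Let A be a symmetric real N×N stochastic matrix (nonnegative entries, rows summing to 1) whose associated graph is connected and which has positive diagonal entries. Then for any ρ : Fin N → Matrix (Fin 2) (Fin 2) ℝ, the iterates ρ(t+1)ᵢ = Σⱼ Aᵢⱼ ρ(t)ⱼ converge as t → ∞ to the constant vector whose entries are all (1/N)·Σⱼ ρ(0)ⱼ. -/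
/-!
By Gershgorin, a stochastic matrix with positive diagonal has all its eigenvalues in `(-1, 1]`;
if it is also symmetric, the spectral theorem `A = U D Uᴴ` shows that `A ^ t` converges to some
`L`. The limit satisfies `A * L = L` and is symmetric and stochastic. A maximum principle on the
connected graph of `A` makes every column of `L` constant, so symmetry makes `L` constant, equal
to `1 / N` by the row sums. Finally `ρ t i = ∑ j, (A ^ t) i j • ρ 0 j`.
-/

open Matrix Filter Finset Topology

theorem exists_tendsto_pow_of_mem_Ioc {r : ℝ} (hr : r ∈ Set.Ioc (-1) 1) :
    ∃ l, Tendsto (r ^ ·) atTop (𝓝 l) := by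
  rcases hr.2.eq_or_lt with rfl | hlt
  · exact ⟨1, by simp⟩
  · exact ⟨0, tendsto_pow_atTop_nhds_zero_of_abs_lt_one (abs_lt.2 ⟨hr.1, hlt⟩)⟩

namespace Matrix

variable {R ι : Type*} [Fintype ι] [DecidableEq ι]

theorem apply_eq_of_mulVec_eq_self_of_forall_le [CommRing R] [LinearOrder R]
    [IsStrictOrderedRing R] {A : Matrix ι ι R} (hA : A ∈ rowStochastic R ι) {x : ι → R}
    (hx : A *ᵥ x = x) {i j : ι} (hmax : ∀ k, x k ≤ x i) (hij : A i j ≠ 0) : x j = x i := by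
  have hsum : ∑ k, A i k * (x i - x k) = 0 := by
    have hrow : ∑ k, A i k * x k = x i := congrFun hx i
    simp only [mul_sub, sum_sub_distrib, ← sum_mul,
      sum_row_of_mem_rowStochastic hA, one_mul, hrow, sub_self]
  have hterm := (sum_eq_zero_iff_of_nonneg fun k _ =>
    mul_nonneg (hA.1 i k) (sub_nonneg.2 (hmax k))).1 hsum j (mem_univ j)
  exact (sub_eq_zero.1 ((mul_eq_zero.1 hterm).resolve_left hij)).symm

theorem apply_eq_of_mulVec_eq_self [CommRing R] [LinearOrder R]
    [IsStrictOrderedRing R] {A : Matrix ι ι R} (hA : A ∈ rowStochastic R ι) (hsymm : A.IsSymm)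
    (hconn : (SimpleGraph.fromRel fun i j => A i j ≠ 0).Preconnected) {x : ι → R}
    (hx : A *ᵥ x = x) (i j : ι) : x i = x j := by
  have : Nonempty ι := ⟨i⟩
  obtain ⟨m, hm⟩ := Finite.exists_max x
  suffices h : ∀ k, x k = x m by rw [h i, h j]
  intro k
  induction (SimpleGraph.reachable_iff_reflTransGen m k).1 (hconn m k) with
  | refl => rfl
  | @tail a b _ hab ih =>
    have hab : A a b ≠ 0 := by
      rcases hab.2 with h | h
      · exact h
      · rwa [hsymm.apply] at h
    exact (apply_eq_of_mulVec_eq_self_of_forall_le hA hx (ih ▸ hm) hab).trans ih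

theorem mem_Ioc_of_hasEigenvalue {A : Matrix ι ι ℝ} (hA : A ∈ rowStochastic ℝ ι)
    (hdiag : ∀ i, 0 < A i i) {μ : ℝ} (hμ : Module.End.HasEigenvalue (toLin' A) μ) :
    μ ∈ Set.Ioc (-1) 1 := by
  obtain ⟨k, hk⟩ := eigenvalue_mem_ball hμ
  have hrad : ∑ j ∈ univ.erase k, ‖A k j‖ = 1 - A k k := by
    simp only [Real.norm_of_nonneg (hA.1 k _)]
    rw [sum_erase_eq_sub (mem_univ k), sum_row_of_mem_rowStochastic hA]
  rw [Metric.mem_closedBall, hrad, Real.dist_eq, abs_le] at hk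
  constructor <;> linarith [hdiag k]

theorem IsHermitian.exists_tendsto_pow {𝕜 : Type*} [RCLike 𝕜] {A : Matrix ι ι 𝕜}
    (hA : A.IsHermitian) (h : ∀ k, hA.eigenvalues k ∈ Set.Ioc (-1) 1) :
    ∃ L, Tendsto (A ^ ·) atTop (𝓝 L) := by
  choose l hl using fun k => exists_tendsto_pow_of_mem_Ioc (h k)
  have hdiag : Tendsto (fun t => diagonal (RCLike.ofReal ∘ hA.eigenvalues) ^ t) atTop
      (𝓝 (diagonal fun k => (l k : 𝕜))) := by
    simp_rw [diagonal_pow]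
    refine ((continuous_id (X := ι → 𝕜)).matrix_diagonal.tendsto _).comp
      (tendsto_pi_nhds.2 fun k => ?_)
    simpa [Function.comp_def] using ((RCLike.continuous_ofReal (K := 𝕜)).tendsto _).comp (hl k)
  set U : Matrix ι ι 𝕜 := (hA.eigenvectorUnitary : Matrix ι ι 𝕜)
  have hconj : Continuous fun X : Matrix ι ι 𝕜 => U * X * star U :=
    (continuous_const.matrix_mul continuous_id).matrix_mul continuous_const
  refine ⟨_, ((hconj.tendsto _).comp hdiag).congr fun t => ?_⟩
  conv_rhs => rw [hA.spectral_theorem, ← map_pow, Unitary.conjStarAlgAut_apply]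
  rfl

theorem apply_eq_inv_card_of_mul_eq_self [Field R] [LinearOrder R]
    [IsStrictOrderedRing R] {A L : Matrix ι ι R} (hA : A ∈ rowStochastic R ι) (hsymm : A.IsSymm)
    (hconn : (SimpleGraph.fromRel fun i j => A i j ≠ 0).Preconnected) (hAL : A * L = L)
    (hL : L.IsSymm) (hLrow : L *ᵥ 1 = 1) (i j : ι) : L i j = (Fintype.card ι : R)⁻¹ := by
  have hcol (j : ι) : ∀ i i', L i j = L i' j :=
    apply_eq_of_mulVec_eq_self hA hsymm hconn (x := fun i => L i j) (by
      ext i; simpa [mulVec, dotProduct, mul_apply] using congr_fun₂ hAL i j)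
  have hconst (j' : ι) : L i j' = L i j := by
    rw [← hL.apply, hcol i j' j, hL.apply]
  have hsum : ∑ j', L i j' = 1 := by simpa [mulVec, dotProduct] using congr_fun hLrow i
  simp only [hconst, sum_const, card_univ, nsmul_eq_mul] at hsum
  exact eq_inv_of_mul_eq_one_right hsum

theorem tendsto_pow_of_mem_rowStochastic {A : Matrix ι ι ℝ} (hA : A ∈ rowStochastic ℝ ι)
    (hsymm : A.IsSymm) (hdiag : ∀ i, 0 < A i i)
    (hconn : (SimpleGraph.fromRel fun i j => A i j ≠ 0).Preconnected) :
    Tendsto (A ^ ·) atTop (𝓝 (of fun _ _ => (Fintype.card ι : ℝ)⁻¹)) := by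
  have hH : A.IsHermitian := isHermitian_iff_isSymm.2 hsymm
  obtain ⟨L, hL⟩ := hH.exists_tendsto_pow fun k => mem_Ioc_of_hasEigenvalue hA hdiag <|
    Module.End.hasEigenvalue_iff_mem_spectrum.2 <| by
      simpa using hH.eigenvalues_mem_spectrum_real k
  have hAL : A * L = L := by
    refine tendsto_nhds_unique ?_ (hL.comp (tendsto_add_atTop_nat 1))
    simpa [Function.comp_def, pow_succ'] using
      ((continuous_const.matrix_mul continuous_id).tendsto L).comp hL
  have hLsymm : L.IsSymm := by
    refine tendsto_nhds_unique ?_ hL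
    simpa [Function.comp_def, (hsymm.pow _).eq] using
      (continuous_id.matrix_transpose.tendsto L).comp hL
  have hLrow : L *ᵥ 1 = 1 := by
    have h := ((continuous_id.matrix_mulVec
      (continuous_const (y := (1 : ι → ℝ)))).tendsto L).comp hL
    simp only [Function.comp_def, id, (pow_mem hA _).2] at h
    exact tendsto_nhds_unique h tendsto_const_nhds
  convert hL
  ext i j
  exact (apply_eq_inv_card_of_mul_eq_self hA hsymm hconn hAL hLsymm hLrow i j).symm

theorem eq_sum_pow_apply_smul {R M : Type*} [CommSemiring R] [AddCommMonoid M] [Module R M]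
    (A : Matrix ι ι R) {ρ : ℕ → ι → M} (hrec : ∀ t i, ρ (t + 1) i = ∑ j, A i j • ρ t j)
    (t : ℕ) (i : ι) : ρ t i = ∑ j, (A ^ t) i j • ρ 0 j := by
  induction t generalizing i with
  | zero => simp [one_apply, ite_smul]
  | succ t ih =>
    simp_rw [hrec, ih, pow_succ', mul_apply, smul_sum, sum_smul, smul_smul]
    exact sum_comm

end Matrix

theorem stochastic_matrix_iterates_average_general {N : ℕ}
    (A : Matrix (Fin N) (Fin N) ℝ)
    (hsymm : A.IsSymm)
    (hnonneg : ∀ i j, 0 ≤ A i j)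
    (hrow : ∀ i, ∑ j, A i j = 1)
    (hdiag : ∀ i, 0 < A i i)
    (hconn : (SimpleGraph.fromRel (fun i j => A i j ≠ 0)).Connected)
    (ρ : ℕ → Fin N → Matrix (Fin 2) (Fin 2) ℝ)
    (hrec : ∀ t i, ρ (t + 1) i = ∑ j, A i j • ρ t j) :
    ∀ i, Tendsto (fun t => ρ t i) atTop (nhds ((N : ℝ)⁻¹ • ∑ j, ρ 0 j)) := by
  intro i
  have hlim := tendsto_pow_of_mem_rowStochastic (mem_rowStochastic_iff_sum.2 ⟨hnonneg, hrow⟩)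
    hsymm hdiag hconn.preconnected
  simp_rw [eq_sum_pow_apply_smul A hrec _ i, smul_sum]
  refine tendsto_finsetSum _ fun j _ => ?_
  simpa using (((continuous_id.matrix_elem i j).tendsto _).comp hlim).smul_const (ρ 0 j)

theorem stochastic_matrix_iterates_average {N : ℕ} (hN : 0 < N)
    (A : Matrix (Fin N) (Fin N) ℝ)
    (hsymm : A.IsSymm)
    (hnonneg : ∀ i j, 0 ≤ A i j)
    (hrow : ∀ i, ∑ j, A i j = 1)
    (hdiag : ∀ i, 0 < A i i)
    (hconn : (SimpleGraph.fromRel (fun i j => A i j ≠ 0)).Connected)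
    (ρ : ℕ → Fin N → Matrix (Fin 2) (Fin 2) ℝ)
    (hrec : ∀ t i, ρ (t + 1) i = ∑ j, A i j • ρ t j) :
    ∀ i, Tendsto (fun t => ρ t i) atTop (nhds ((N : ℝ)⁻¹ • ∑ j, ρ 0 j)) :=
  stochastic_matrix_iterates_average_general A hsymm hnonneg hrow hdiag hconn ρ hrec
end
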